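/- arXiv:1904.06105 — 5 statements merged into one kernel-verified Lean document; each statement's English description precedes it below -/
import Mathlib

section
/- Let H be a real Hilbert space, F : H → ℝ a function, C₀ ≥ 0, ε ≥ 0, T > 0, and S ⊂ (0,T) a finite set. Let u, w : [0,T] → H be continuous curves that are differentiable at every t ∈ (0,T) \ S and satisfy, for every such t and every v ∈ H, the evolutionary variational inequalities ⟨u'(t), u(t) − v⟩ ≤ F(v) − F(u(t)) + (C₀/2)·‖u(t) − v‖² and ⟨w'(t), w(t) − v⟩ ≤ F(v) − F(w(t)) + (C₀/2)·‖w(t) − v‖² + ε. Then for every t ∈ [0,T] one has ‖w(t) − u(t)‖² ≤ e^{2C₀t}·‖w(0) − u(0)‖² + 2t·e^{2C₀t}·ε. -/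
/-! Testing the exact inequality for `u` at `v = w t` and the perturbed one for `w` at `v = u t`
and adding them, the values of `F` cancel and `d/dt ‖w - u‖² ≤ 2C₀‖w - u‖² + 2ε` off `S`.
Gronwall's argument then applies: `e^{-2C₀t}‖w - u‖²` has derivative at most `2ε`, and since
the curves are continuous, the finitely many points of `S` do not break the resulting linear
growth bound. -/

open Set Real

theorem sub_le_mul_sub_of_hasDerivAt_le_off_finite {f f' : ℝ → ℝ} {C : ℝ} {S : Set ℝ}
    (hS : S.Finite) {a b : ℝ} (hab : a ≤ b) (hf : ContinuousOn f (Icc a b))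
    (hf' : ∀ x ∈ Ioo a b \ S, HasDerivAt f (f' x) x) (hC : ∀ x ∈ Ioo a b \ S, f' x ≤ C) :
    f b - f a ≤ C * (b - a) := by
  induction S, hS using Set.Finite.induction_on generalizing a b with
  | empty =>
    simp only [sdiff_empty] at hf' hC
    refine (convex_Icc a b).image_sub_le_mul_sub_of_deriv_le hf (fun x hx => ?_) (fun x hx => ?_)
      a (left_mem_Icc.2 hab) b (right_mem_Icc.2 hab) hab <;> rw [interior_Icc] at hx
    · exact (hf' x hx).differentiableAt.differentiableWithinAt
    · exact (hf' x hx).deriv ▸ hC x hx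
  | @insert s S _ _ ih =>
    by_cases hs : s ∈ Ioo a b
    · have sub_left : Ioo a s \ S ⊆ Ioo a b \ insert s S := fun x ⟨hx, hxS⟩ =>
        ⟨⟨hx.1, hx.2.trans hs.2⟩, by simp [hxS, hx.2.ne]⟩
      have sub_right : Ioo s b \ S ⊆ Ioo a b \ insert s S := fun x ⟨hx, hxS⟩ =>
        ⟨⟨hs.1.trans hx.1, hx.2⟩, by simp [hxS, hx.1.ne']⟩
      have left := ih hs.1.le (hf.mono (Icc_subset_Icc_right hs.2.le))
        (fun x hx => hf' x (sub_left hx)) (fun x hx => hC x (sub_left hx))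
      have right := ih hs.2.le (hf.mono (Icc_subset_Icc_left hs.1.le))
        (fun x hx => hf' x (sub_right hx)) (fun x hx => hC x (sub_right hx))
      linarith
    · have sub : Ioo a b \ S ⊆ Ioo a b \ insert s S := fun x ⟨hx, hxS⟩ =>
        ⟨hx, by rintro (rfl | h); exacts [hs hx, hxS h]⟩
      exact ih hab hf (fun x hx => hf' x (sub hx)) (fun x hx => hC x (sub hx))

theorem le_exp_mul_of_hasDerivAt_le_off_finite {g g' : ℝ → ℝ} {K δ T : ℝ} {S : Set ℝ}
    (hK : 0 ≤ K) (hδ : 0 ≤ δ) (hS : S.Finite) (hg : ContinuousOn g (Icc 0 T))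
    (hg' : ∀ t ∈ Ioo 0 T \ S, HasDerivAt g (g' t) t)
    (hbound : ∀ t ∈ Ioo 0 T \ S, g' t ≤ K * g t + δ) {t : ℝ} (ht : t ∈ Icc 0 T) :
    g t ≤ exp (K * t) * (g 0 + δ * t) := by
  set φ : ℝ → ℝ := fun s => exp (-K * s) * g s
  have hφ' : ∀ s ∈ Ioo 0 T \ S,
      HasDerivAt φ (exp (-K * s) * (g' s - K * g s)) s := fun s hs => by
    refine (((hasDerivAt_id s).const_mul (-K)).exp.mul (hg' s hs)).congr_deriv ?_
    simp only [id, mul_one]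
    ring
  have hφ'_le : ∀ s ∈ Ioo 0 T \ S, exp (-K * s) * (g' s - K * g s) ≤ δ := fun s hs => by
    have hexp : exp (-K * s) ≤ 1 := exp_le_one_iff.2 (mul_nonpos_of_nonpos_of_nonneg (neg_nonpos.2 hK) hs.1.1.le)
    calc exp (-K * s) * (g' s - K * g s) ≤ exp (-K * s) * δ := by
          gcongr; linarith [hbound s hs]
      _ ≤ 1 * δ := by gcongr
      _ = δ := one_mul δ
  have hφ_le : φ t - φ 0 ≤ δ * (t - 0) :=
    sub_le_mul_sub_of_hasDerivAt_le_off_finite hS ht.1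
      ((continuous_exp.comp (continuous_const.mul continuous_id)).continuousOn.mul
        (hg.mono (Icc_subset_Icc_right ht.2)))
      (fun s hs => hφ' s ⟨Ioo_subset_Ioo_right ht.2 hs.1, hs.2⟩)
      (fun s hs => hφ'_le s ⟨Ioo_subset_Ioo_right ht.2 hs.1, hs.2⟩)
  have hg_eq : g t = exp (K * t) * φ t := by
    simp only [φ, ← mul_assoc, ← exp_add, neg_mul, add_neg_cancel, exp_zero, one_mul]
  rw [hg_eq]
  gcongr
  simp only [φ, sub_zero, mul_zero, exp_zero, one_mul] at hφ_le
  linarith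

theorem inner_sub_sub_le_of_evi {H : Type*} [NormedAddCommGroup H] [InnerProductSpace ℝ H]
    {F : H → ℝ} {C₀ ε : ℝ} {x x' y y' : H}
    (hx : ∀ v, inner ℝ x' (x - v) ≤ F v - F x + (C₀ / 2) * ‖x - v‖ ^ 2)
    (hy : ∀ v, inner ℝ y' (y - v) ≤ F v - F y + (C₀ / 2) * ‖y - v‖ ^ 2 + ε) :
    inner ℝ (y' - x') (y - x) ≤ C₀ * ‖y - x‖ ^ 2 + ε := by
  have hxy := hx y
  have hyx := hy x
  rw [norm_sub_rev] at hxy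
  have : inner ℝ x' (x - y) = -inner ℝ x' (y - x) := by rw [← inner_neg_right, neg_sub]
  rw [inner_sub_left]
  linarith

theorem evi_error_estimate_general
    {H : Type*} [NormedAddCommGroup H] [InnerProductSpace ℝ H]
    (F : H → ℝ) (C₀ ε T : ℝ) (hC₀ : 0 ≤ C₀) (hε : 0 ≤ ε)
    (S : Set ℝ) (hS : S.Finite)
    (u w : ℝ → H) (u' w' : ℝ → H)
    (hu_cont : ContinuousOn u (Set.Icc 0 T))
    (hw_cont : ContinuousOn w (Set.Icc 0 T))
    (hu_deriv : ∀ t ∈ Set.Ioo 0 T \ S, HasDerivAt u (u' t) t)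
    (hw_deriv : ∀ t ∈ Set.Ioo 0 T \ S, HasDerivAt w (w' t) t)
    (hu_evi : ∀ t ∈ Set.Ioo 0 T \ S, ∀ v : H,
      (inner ℝ (u' t) (u t - v) : ℝ) ≤ F v - F (u t) + (C₀ / 2) * ‖u t - v‖ ^ 2)
    (hw_evi : ∀ t ∈ Set.Ioo 0 T \ S, ∀ v : H,
      (inner ℝ (w' t) (w t - v) : ℝ) ≤ F v - F (w t) + (C₀ / 2) * ‖w t - v‖ ^ 2 + ε) :
    ∀ t ∈ Set.Icc 0 T,
      ‖w t - u t‖ ^ 2 ≤ Real.exp (2 * C₀ * t) * ‖w 0 - u 0‖ ^ 2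
        + 2 * t * Real.exp (2 * C₀ * t) * ε := by
  intro t ht
  have gronwall := le_exp_mul_of_hasDerivAt_le_off_finite (g := fun s => ‖w s - u s‖ ^ 2)
    (by positivity : 0 ≤ 2 * C₀) (by positivity : 0 ≤ 2 * ε) hS
    ((hw_cont.sub hu_cont).norm.pow 2)
    (fun s hs => ((hw_deriv s hs).sub (hu_deriv s hs)).norm_sq)
    (fun s hs => by
      have hinner := inner_sub_sub_le_of_evi (hu_evi s hs) (hw_evi s hs)
      rw [Pi.sub_apply, real_inner_comm]
      linarith)
    ht
  linarith

/-- Gronwall-type error estimate between two curves satisfying evolutionary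
variational inequalities (one exact, one with defect `ε`). -/
theorem evi_error_estimate
    {H : Type*} [NormedAddCommGroup H] [InnerProductSpace ℝ H] [CompleteSpace H]
    (F : H → ℝ) (C₀ ε T : ℝ) (hC₀ : 0 ≤ C₀) (hε : 0 ≤ ε) (hT : 0 < T)
    (S : Set ℝ) (hS : S.Finite) (hST : S ⊆ Set.Ioo 0 T)
    (u w : ℝ → H) (u' w' : ℝ → H)
    (hu_cont : ContinuousOn u (Set.Icc 0 T))
    (hw_cont : ContinuousOn w (Set.Icc 0 T))
    (hu_deriv : ∀ t ∈ Set.Ioo 0 T \ S, HasDerivAt u (u' t) t)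
    (hw_deriv : ∀ t ∈ Set.Ioo 0 T \ S, HasDerivAt w (w' t) t)
    (hu_evi : ∀ t ∈ Set.Ioo 0 T \ S, ∀ v : H,
      (inner ℝ (u' t) (u t - v) : ℝ) ≤ F v - F (u t) + (C₀ / 2) * ‖u t - v‖ ^ 2)
    (hw_evi : ∀ t ∈ Set.Ioo 0 T \ S, ∀ v : H,
      (inner ℝ (w' t) (w t - v) : ℝ) ≤ F v - F (w t) + (C₀ / 2) * ‖w t - v‖ ^ 2 + ε) :
    ∀ t ∈ Set.Icc 0 T,
      ‖w t - u t‖ ^ 2 ≤ Real.exp (2 * C₀ * t) * ‖w 0 - u 0‖ ^ 2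
        + 2 * t * Real.exp (2 * C₀ * t) * ε :=
  evi_error_estimate_general F C₀ ε T hC₀ hε S hS u w u' w' hu_cont hw_cont hu_deriv hw_deriv hu_evi
    hw_evi
end

section
/- Let H be a real Hilbert space, F : H → ℝ convex and Lipschitz with constant L ≥ 0, τ > 0, K ≥ 0 with τ·K·L ≤ 1, u ∈ H, and T ⊆ H a closed convex set with 0 ∈ T. Let X ∈ T be a minimizer over T of the localized energy Φ(X) := τ·F(u + X) + (1/2)·‖X‖², i.e. Φ(X) ≤ Φ(Y) for all Y ∈ T. If v ∈ H satisfies ‖v − (u + X)‖ ≤ (K/2)·‖X‖², then F(v) ≤ F(u). -/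
/-! Comparing the minimizer `X` with the competitor `0` gives
`τ · (F u - F (u + X)) ≥ ‖X‖² / 2`. The Lipschitz bound turns the Taylor estimate into
`τ · (F v - F (u + X)) ≤ τ K L · ‖X‖² / 2`, which the step size restriction `τ K L ≤ 1`
absorbs into the decrease of the proximal step. -/

lemma mul_mul_le_half_sq_of_mul_mul_le_one {τ K L d r : ℝ} (hτ : 0 ≤ τ) (hL : 0 ≤ L)
    (hstep : τ * K * L ≤ 1) (hd : d ≤ K / 2 * r ^ 2) :
    τ * (L * d) ≤ 1 / 2 * r ^ 2 :=
  calc τ * (L * d) ≤ τ * (L * (K / 2 * r ^ 2)) := by gcongr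
    _ = τ * K * L * (1 / 2 * r ^ 2) := by ring
    _ ≤ 1 * (1 / 2 * r ^ 2) := by gcongr
    _ = 1 / 2 * r ^ 2 := one_mul _

theorem energy_dissipation_step_general
    {H : Type*} [NormedAddCommGroup H]
    (F : H → ℝ) (L : ℝ) (hL : 0 ≤ L)
    (hF_lip : ∀ a b : H, |F a - F b| ≤ L * ‖a - b‖)
    (τ K : ℝ) (hτ : 0 < τ) (hstep : τ * K * L ≤ 1)
    (u : H) (T : Set H)
    (hT0 : (0 : H) ∈ T)
    (X : H)
    (hmin : ∀ Y ∈ T, τ * F (u + X) + (1 / 2) * ‖X‖ ^ 2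
      ≤ τ * F (u + Y) + (1 / 2) * ‖Y‖ ^ 2)
    (v : H) (hv : ‖v - (u + X)‖ ≤ (K / 2) * ‖X‖ ^ 2) :
    F v ≤ F u := by
  have hdescent : τ * F (u + X) + 1 / 2 * ‖X‖ ^ 2 ≤ τ * F u := by
    simpa using hmin 0 hT0
  have hlip : F v - F (u + X) ≤ L * ‖v - (u + X)‖ := (abs_le.mp (hF_lip _ _)).2
  have herror : τ * (L * ‖v - (u + X)‖) ≤ 1 / 2 * ‖X‖ ^ 2 :=
    mul_mul_le_half_sq_of_mul_mul_le_one hτ.le hL hstep hv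
  refine le_of_mul_le_mul_left ?_ hτ
  linarith [mul_le_mul_of_nonneg_left hlip hτ.le]

/-- Energy dissipation for one step of the modified minimizing movement scheme:
if `X` minimizes the localized energy over a closed convex set containing `0`,
the step size restriction `τ·K·L ≤ 1` holds, and `v` is within the Taylor
estimate `(K/2)·‖X‖²` of `u + X`, then `F v ≤ F u`. -/
theorem energy_dissipation_step
    {H : Type*} [NormedAddCommGroup H] [InnerProductSpace ℝ H] [CompleteSpace H]
    (F : H → ℝ) (L : ℝ) (hL : 0 ≤ L)
    (hF_convex : ConvexOn ℝ Set.univ F)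
    (hF_lip : ∀ a b : H, |F a - F b| ≤ L * ‖a - b‖)
    (τ K : ℝ) (hτ : 0 < τ) (hK : 0 ≤ K) (hstep : τ * K * L ≤ 1)
    (u : H) (T : Set H) (hT_closed : IsClosed T) (hT_convex : Convex ℝ T)
    (hT0 : (0 : H) ∈ T)
    (X : H) (hX : X ∈ T)
    (hmin : ∀ Y ∈ T, τ * F (u + X) + (1 / 2) * ‖X‖ ^ 2
      ≤ τ * F (u + Y) + (1 / 2) * ‖Y‖ ^ 2)
    (v : H) (hv : ‖v - (u + X)‖ ≤ (K / 2) * ‖X‖ ^ 2) :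
    F v ≤ F u :=
  energy_dissipation_step_general F L hL hF_lip τ K hτ hstep u T hT0 X hmin v hv
end

section
/- Let H be a real Hilbert space, F : H → ℝ convex and Lipschitz with constant L ≥ 0, τ > 0, u ∈ H, and T ⊆ H a closed linear subspace with orthogonal projection P : H → T. If X ∈ T minimizes the localized energy Φ(X) := τ·F(u + X) + (1/2)·‖X‖² over T, then there exists ζ ∈ H that is a subgradient of F at u + X (i.e. F(u + X) + ⟨ζ, v − (u + X)⟩ ≤ F(v) for all v ∈ H) such that X = −τ·P(ζ). -/
/-! The one-sided directional derivative `d ↦ F'(p; d)` of a convex function at `p = u + X` is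
sublinear, and the first-order condition for the minimizer says that `d ↦ ⟪-X/τ, d⟫` lies below
it on `T`. Hahn–Banach extends this functional to all of `H` while staying below `F'(p; ·)`; such
an extension is a subgradient, it is bounded thanks to the Lipschitz constant, so Riesz represents
it by some `ζ`, and then `-X/τ` is the orthogonal projection of `ζ` onto `T`. -/

section DirDeriv

open Set Filter Topology

variable {E : Type*} [AddCommGroup E] [Module ℝ E]

/-- For convex `f` the difference quotients decrease as `t ↓ 0` and are bounded below, so this
infimum is the one-sided directional derivative `f'(x; d)`. -/
noncomputable def dirDeriv (f : E → ℝ) (x d : E) : ℝ :=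
  ⨅ t : Ioi (0 : ℝ), (f (x + (t : ℝ) • d) - f x) / t

namespace ConvexOn

variable {f : E → ℝ}

theorem comp_line (hf : ConvexOn ℝ univ f) (x d : E) :
    ConvexOn ℝ univ fun t : ℝ => f (x + t • d) :=
  (hf.translate_right x).comp_linearMap (LinearMap.toSpanSingleton ℝ E d)

theorem diffQuot_mono (hf : ConvexOn ℝ univ f) (x d : E) {s t : ℝ} (hs : 0 < s) (hst : s ≤ t) :
    (f (x + s • d) - f x) / s ≤ (f (x + t • d) - f x) / t := by
  simpa using (hf.comp_line x d).secant_mono (a := 0) trivial trivial trivial hs.ne'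
    (hs.trans_le hst).ne' hst

theorem sub_le_diffQuot (hf : ConvexOn ℝ univ f) (x d : E) {t : ℝ} (ht : 0 < t) :
    f x - f (x - d) ≤ (f (x + t • d) - f x) / t := by
  have := (hf.comp_line x d).secant_mono (a := 0) trivial trivial trivial
    (by norm_num : (-1 : ℝ) ≠ 0) ht.ne' (by linarith)
  simp only [neg_smul, one_smul, zero_smul, add_zero, sub_zero, ← sub_eq_add_neg] at this
  linarith [show (f (x - d) - f x) / (-1) = f x - f (x - d) by ring]

theorem bddBelow_diffQuot (hf : ConvexOn ℝ univ f) (x d : E) :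
    BddBelow (range fun t : Ioi (0 : ℝ) => (f (x + (t : ℝ) • d) - f x) / t) :=
  ⟨f x - f (x - d), by rintro _ ⟨t, rfl⟩; exact hf.sub_le_diffQuot x d t.2⟩

theorem dirDeriv_le_diffQuot (hf : ConvexOn ℝ univ f) (x d : E) {t : ℝ} (ht : 0 < t) :
    dirDeriv f x d ≤ (f (x + t • d) - f x) / t :=
  ciInf_le (hf.bddBelow_diffQuot x d) ⟨t, ht⟩

theorem dirDeriv_le_sub (hf : ConvexOn ℝ univ f) (x d : E) :
    dirDeriv f x d ≤ f (x + d) - f x := by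
  simpa using hf.dirDeriv_le_diffQuot x d one_pos

theorem le_dirDeriv_of_forall_sub_mul_le (hf : ConvexOn ℝ univ f) {x d : E} {a c : ℝ}
    (h : ∀ s > 0, a - s * c ≤ (f (x + s • d) - f x) / s) : a ≤ dirDeriv f x d := by
  refine le_ciInf fun ⟨t, ht⟩ => ?_
  have hlim : Tendsto (fun s : ℝ => a - s * c) (𝓝[>] 0) (𝓝 a) := by
    simpa using tendsto_nhdsWithin_of_tendsto_nhds
      ((by fun_prop : Continuous fun s : ℝ => a - s * c).tendsto 0)
  refine le_of_tendsto hlim ?_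
  filter_upwards [Ioo_mem_nhdsGT ht] with s ⟨hs, hst⟩
  exact (h s hs).trans (hf.diffQuot_mono x d hs hst.le)

theorem dirDeriv_smul_le (hf : ConvexOn ℝ univ f) (x d : E) {c : ℝ} (hc : 0 < c) :
    dirDeriv f x (c • d) ≤ c * dirDeriv f x d := by
  refine le_trans (le_ciInf fun ⟨t, ht⟩ => ?_) (Real.mul_iInf_of_nonneg hc.le _).ge
  have := hf.dirDeriv_le_diffQuot x (c • d) (div_pos ht hc)
  rw [smul_smul, div_mul_cancel₀ t hc.ne'] at this
  exact this.trans_eq (by dsimp only; field_simp)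

theorem dirDeriv_smul (hf : ConvexOn ℝ univ f) (x d : E) {c : ℝ} (hc : 0 < c) :
    dirDeriv f x (c • d) = c * dirDeriv f x d := by
  refine le_antisymm (hf.dirDeriv_smul_le x d hc) ?_
  have := hf.dirDeriv_smul_le x (c • d) (inv_pos.2 hc)
  rw [smul_smul, inv_mul_cancel₀ hc.ne', one_smul] at this
  rwa [← le_inv_mul_iff₀ hc]

theorem diffQuot_add_le (hf : ConvexOn ℝ univ f) (x d₁ d₂ : E) {t : ℝ} (ht : 0 < t) :
    (f (x + t • (d₁ + d₂)) - f x) / t ≤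
      (f (x + (2 * t) • d₁) - f x) / (2 * t) + (f (x + (2 * t) • d₂) - f x) / (2 * t) := by
  have hmid := hf.2 (mem_univ (x + (2 * t) • d₁)) (mem_univ (x + (2 * t) • d₂))
    (by norm_num : (0 : ℝ) ≤ 1 / 2) (by norm_num : (0 : ℝ) ≤ 1 / 2) (by norm_num)
  have hcomb : (1 / 2 : ℝ) • (x + (2 * t) • d₁) + (1 / 2 : ℝ) • (x + (2 * t) • d₂) =
      x + t • (d₁ + d₂) := by
    match_scalars <;> ring
  rw [hcomb, smul_eq_mul, smul_eq_mul] at hmid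
  rw [← add_div, div_le_div_iff₀ ht (by positivity)]
  nlinarith

theorem dirDeriv_add_le (hf : ConvexOn ℝ univ f) (x d₁ d₂ : E) :
    dirDeriv f x (d₁ + d₂) ≤ dirDeriv f x d₁ + dirDeriv f x d₂ := by
  suffices h : ∀ t₁ > 0, ∀ t₂ > 0, dirDeriv f x (d₁ + d₂) ≤
      (f (x + t₁ • d₁) - f x) / t₁ + (f (x + t₂ • d₂) - f x) / t₂ by
    have h₁ : ∀ t₂ > 0, dirDeriv f x (d₁ + d₂) - (f (x + t₂ • d₂) - f x) / t₂ ≤ dirDeriv f x d₁ :=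
      fun t₂ ht₂ => le_ciInf fun ⟨t₁, ht₁⟩ => sub_le_iff_le_add.2 (h t₁ ht₁ t₂ ht₂)
    have h₂ : dirDeriv f x (d₁ + d₂) - dirDeriv f x d₁ ≤ dirDeriv f x d₂ :=
      le_ciInf fun ⟨t₂, ht₂⟩ => sub_le_comm.1 (h₁ t₂ ht₂)
    linarith
  intro t₁ ht₁ t₂ ht₂
  obtain ⟨t, ht, ht₁', ht₂'⟩ : ∃ t > 0, 2 * t ≤ t₁ ∧ 2 * t ≤ t₂ :=
    ⟨min t₁ t₂ / 2, by positivity, by linarith [min_le_left t₁ t₂],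
      by linarith [min_le_right t₁ t₂]⟩
  calc dirDeriv f x (d₁ + d₂) ≤ (f (x + t • (d₁ + d₂)) - f x) / t :=
        hf.dirDeriv_le_diffQuot x _ ht
    _ ≤ (f (x + (2 * t) • d₁) - f x) / (2 * t) + (f (x + (2 * t) • d₂) - f x) / (2 * t) :=
        hf.diffQuot_add_le x d₁ d₂ ht
    _ ≤ _ := add_le_add (hf.diffQuot_mono x d₁ (by positivity) ht₁')
        (hf.diffQuot_mono x d₂ (by positivity) ht₂')

end ConvexOn

end DirDeriv

section Hilbert

open Set
open scoped InnerProductSpace RealInnerProductSpace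

variable {H : Type*} [NormedAddCommGroup H] [InnerProductSpace ℝ H]

theorem Submodule.eq_of_forall_inner_sub_eq_zero {T : Submodule ℝ H} {y a b : H}
    (ha : a ∈ T) (hb : b ∈ T) (hya : ∀ z ∈ T, ⟪y - a, z⟫ = 0) (hyb : ∀ z ∈ T, ⟪y - b, z⟫ = 0) :
    a = b := by
  have hab : ⟪a - b, a - b⟫ = 0 := by
    have := congrArg₂ (· - ·) (hyb _ (T.sub_mem ha hb)) (hya _ (T.sub_mem ha hb))
    simpa only [← inner_sub_left, sub_sub_sub_cancel_left, sub_zero] using this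
  exact sub_eq_zero.1 (inner_self_eq_zero.1 hab)

theorem ConvexOn.exists_subgradient_inner_eq_on [CompleteSpace H] {F : H → ℝ}
    (hF : ConvexOn ℝ univ F) {p w : H} {L : ℝ} (hbound : ∀ d, F (p + d) - F p ≤ L * ‖d‖)
    (T : Submodule ℝ H) (hw : ∀ d ∈ T, ⟪w, d⟫ ≤ dirDeriv F p d) :
    ∃ ζ : H, (∀ v, F p + ⟪ζ, v - p⟫ ≤ F v) ∧ ∀ d ∈ T, ⟪ζ, d⟫ = ⟪w, d⟫ := by
  obtain ⟨g, hg_ext, hg_le⟩ := exists_extension_of_le_sublinear ((innerₛₗ ℝ w).toPMap T)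
    (dirDeriv F p) (fun c hc d => hF.dirDeriv_smul p d hc) (hF.dirDeriv_add_le p)
    (fun ⟨d, hd⟩ => hw d hd)
  have hg_sub : ∀ d, g d ≤ F (p + d) - F p := fun d => (hg_le d).trans (hF.dirDeriv_le_sub p d)
  have hg_bound : ∀ d, ‖g d‖ ≤ L * ‖d‖ := fun d => by
    refine abs_le.2 ⟨?_, (hg_sub d).trans (hbound d)⟩
    have := (hg_sub (-d)).trans (hbound (-d))
    rw [map_neg, norm_neg] at this
    linarith
  refine ⟨(InnerProductSpace.toDual ℝ H).symm (g.mkContinuous L hg_bound), fun v => ?_,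
    fun d hd => ?_⟩
  · rw [InnerProductSpace.toDual_symm_apply, LinearMap.mkContinuous_apply]
    have := hg_sub (v - p)
    rw [add_sub_cancel] at this
    linarith
  · rw [InnerProductSpace.toDual_symm_apply, LinearMap.mkContinuous_apply]
    exact hg_ext ⟨d, hd⟩

theorem ConvexOn.inner_le_dirDeriv_of_isMinOn {F : H → ℝ} (hF : ConvexOn ℝ univ F) {τ : ℝ}
    (hτ : 0 < τ) {u X : H} {T : Submodule ℝ H} (hX : X ∈ T)
    (hmin : ∀ Y ∈ T, τ * F (u + X) + (1 / 2) * ‖X‖ ^ 2 ≤ τ * F (u + Y) + (1 / 2) * ‖Y‖ ^ 2)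
    {d : H} (hd : d ∈ T) :
    ⟪(-τ⁻¹) • X, d⟫ ≤ dirDeriv F (u + X) d := by
  refine hF.le_dirDeriv_of_forall_sub_mul_le (c := ‖d‖ ^ 2 / (2 * τ)) fun s hs => ?_
  have h := hmin (X + s • d) (T.add_mem hX (T.smul_mem s hd))
  rw [← add_assoc, norm_add_sq_real, real_inner_smul_right, norm_smul, Real.norm_eq_abs,
    abs_of_pos hs, mul_pow] at h
  rw [real_inner_smul_left, le_div_iff₀ hs]
  calc (-τ⁻¹ * ⟪X, d⟫ - s * (‖d‖ ^ 2 / (2 * τ))) * s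
      = (-(s * ⟪X, d⟫) - s ^ 2 * ‖d‖ ^ 2 / 2) / τ := by field_simp
    _ ≤ F (u + X + s • d) - F (u + X) := by rw [div_le_iff₀' hτ]; linarith

end Hilbert

theorem localized_minimizer_subgradient_general
    {H : Type*} [NormedAddCommGroup H] [InnerProductSpace ℝ H] [CompleteSpace H]
    (F : H → ℝ) (L : ℝ)
    (hF_convex : ConvexOn ℝ Set.univ F)
    (hF_lip : ∀ a b : H, |F a - F b| ≤ L * ‖a - b‖)
    (τ : ℝ) (hτ : 0 < τ) (u : H)
    (T : Submodule ℝ H)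
    (P : H → H)
    (hP_mem : ∀ y : H, P y ∈ T)
    (hP_orth : ∀ y : H, ∀ z ∈ T, (inner ℝ (y - P y) z : ℝ) = 0)
    (X : H) (hX : X ∈ T)
    (hmin : ∀ Y ∈ T, τ * F (u + X) + (1 / 2) * ‖X‖ ^ 2
      ≤ τ * F (u + Y) + (1 / 2) * ‖Y‖ ^ 2) :
    ∃ ζ : H, (∀ v : H, F (u + X) + (inner ℝ ζ (v - (u + X)) : ℝ) ≤ F v) ∧
      X = -τ • P ζ := by
  set w : H := (-τ⁻¹) • X
  obtain ⟨ζ, hζ_sub, hζ_T⟩ := hF_convex.exists_subgradient_inner_eq_on (p := u + X) (w := w)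
    (fun d => by simpa using (abs_le.1 (hF_lip (u + X + d) (u + X))).2) T
    (fun d hd => hF_convex.inner_le_dirDeriv_of_isMinOn hτ hX hmin hd)
  refine ⟨ζ, hζ_sub, ?_⟩
  have hPζ : P ζ = w := Submodule.eq_of_forall_inner_sub_eq_zero (hP_mem ζ) (T.smul_mem _ hX)
    (hP_orth ζ) (fun z hz => by rw [inner_sub_left, hζ_T z hz, sub_self])
  rw [hPζ, smul_smul, neg_mul_neg, mul_inv_cancel₀ hτ.ne', one_smul]

/-- Subgradient characterization of the minimizer of the localized energy:
if `X` minimizes `Y ↦ τ·F(u + Y) + (1/2)·‖Y‖²` over a closed linear subspace `T`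
with orthogonal projection `P`, then `X = -τ • P ζ` for some subgradient `ζ`
of `F` at `u + X`. -/
theorem localized_minimizer_subgradient
    {H : Type*} [NormedAddCommGroup H] [InnerProductSpace ℝ H] [CompleteSpace H]
    (F : H → ℝ) (L : ℝ) (hL : 0 ≤ L)
    (hF_convex : ConvexOn ℝ Set.univ F)
    (hF_lip : ∀ a b : H, |F a - F b| ≤ L * ‖a - b‖)
    (τ : ℝ) (hτ : 0 < τ) (u : H)
    (T : Submodule ℝ H) (hT_closed : IsClosed (T : Set H))
    (P : H → H)
    (hP_mem : ∀ y : H, P y ∈ T)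
    (hP_orth : ∀ y : H, ∀ z ∈ T, (inner ℝ (y - P y) z : ℝ) = 0)
    (X : H) (hX : X ∈ T)
    (hmin : ∀ Y ∈ T, τ * F (u + X) + (1 / 2) * ‖X‖ ^ 2
      ≤ τ * F (u + Y) + (1 / 2) * ‖Y‖ ^ 2) :
    ∃ ζ : H, (∀ v : H, F (u + X) + (inner ℝ ζ (v - (u + X)) : ℝ) ≤ F v) ∧
      X = -τ • P ζ :=
  localized_minimizer_subgradient_general F L hF_convex hF_lip τ hτ u T P hP_mem hP_orth X hX hmin
end

section
/- Let H be a real Hilbert space, F : H → ℝ a function, C₀ ≥ 0, T > 0, and S ⊂ (0,T) a finite set. Let u, w : [0,T] → H be continuous curves differentiable at every t ∈ (0,T) \ S such that for every such t and every v ∈ H, ⟨u'(t), u(t) − v⟩ ≤ F(v) − F(u(t)) + (C₀/2)·‖u(t) − v‖² and ⟨w'(t), w(t) − v⟩ ≤ F(v) − F(w(t)) + (C₀/2)·‖w(t) − v‖². If u(0) = w(0), then u(t) = w(t) for all t ∈ [0,T]. -/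
/-!
Adding the two evolutionary variational inequalities, the first tested with `v = w t` and the
second with `v = u t`, the energy terms cancel and `⟪u' - w', u - w⟫ ≤ C₀ ‖u - w‖²`. Hence
`g = ‖u - w‖²` satisfies `g' ≤ 2 C₀ g` off the finite set `S`, so `exp (-2 C₀ t) g t` is
nonincreasing (Grönwall), and it vanishes at `t = 0`.
-/

open Set

section FiniteExceptions

variable {f f' : ℝ → ℝ} {a b : ℝ} {S : Set ℝ}

theorem antitoneOn_Icc_of_hasDerivAt_nonpos_off_finite (hS : S.Finite)
    (hf : ContinuousOn f (Icc a b)) (hf' : ∀ t ∈ Ioo a b \ S, HasDerivAt f (f' t) t)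
    (hf'_nonpos : ∀ t ∈ Ioo a b \ S, f' t ≤ 0) : AntitoneOn f (Icc a b) := by
  induction S, hS using Set.Finite.induction_on generalizing a b with
  | empty =>
    simp only [sdiff_empty] at hf' hf'_nonpos
    refine antitoneOn_of_hasDerivWithinAt_nonpos (convex_Icc a b) hf (fun t ht => ?_)
      (fun t ht => hf'_nonpos t (by rwa [interior_Icc] at ht))
    rw [interior_Icc] at ht ⊢
    exact (hf' t ht).hasDerivWithinAt
  | @insert x s _ _ ih =>
    by_cases hx : x ∈ Ioo a b
    · have left : Ioo a x \ s ⊆ Ioo a b \ insert x s := fun t ⟨ht, hts⟩ =>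
        ⟨⟨ht.1, ht.2.trans hx.2⟩, by rintro (rfl | h); exacts [ht.2.false, hts h]⟩
      have right : Ioo x b \ s ⊆ Ioo a b \ insert x s := fun t ⟨ht, hts⟩ =>
        ⟨⟨hx.1.trans ht.1, ht.2⟩, by rintro (rfl | h); exacts [ht.1.false, hts h]⟩
      have h₁ := ih (hf.mono (Icc_subset_Icc_right hx.2.le))
        (fun t ht => hf' t (left ht)) (fun t ht => hf'_nonpos t (left ht))
      have h₂ := ih (hf.mono (Icc_subset_Icc_left hx.1.le))
        (fun t ht => hf' t (right ht)) (fun t ht => hf'_nonpos t (right ht))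
      rw [← Icc_union_Icc_eq_Icc hx.1.le hx.2.le]
      exact h₁.union_right h₂ (isGreatest_Icc hx.1.le) (isLeast_Icc hx.2.le)
    · have sub : Ioo a b \ s ⊆ Ioo a b \ insert x s := fun t ⟨ht, hts⟩ =>
        ⟨ht, by rintro (rfl | h); exacts [hx ht, hts h]⟩
      exact ih hf (fun t ht => hf' t (sub ht)) (fun t ht => hf'_nonpos t (sub ht))

theorem le_zero_of_hasDerivAt_le_mul_off_finite (K : ℝ) (hS : S.Finite)
    (hf : ContinuousOn f (Icc a b)) (hf' : ∀ t ∈ Ioo a b \ S, HasDerivAt f (f' t) t)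
    (hf'_le : ∀ t ∈ Ioo a b \ S, f' t ≤ K * f t) (ha : f a ≤ 0) :
    ∀ t ∈ Icc a b, f t ≤ 0 := by
  -- Grönwall: the factor `exp (-K t)` absorbs the growth allowed by `f' ≤ K f`.
  have hanti : AntitoneOn (fun t => Real.exp (-K * t) * f t) (Icc a b) := by
    refine antitoneOn_Icc_of_hasDerivAt_nonpos_off_finite hS
      ((Real.continuous_exp.comp (continuous_const_mul (-K))).continuousOn.mul hf)
      (fun t ht => (((hasDerivAt_id t).const_mul (-K)).exp.mul (hf' t ht)))
      (fun t ht => ?_)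
    calc Real.exp (-K * id t) * (-K * 1) * f t + Real.exp (-K * id t) * f' t
        = Real.exp (-K * t) * (f' t - K * f t) := by simp only [id]; ring
      _ ≤ 0 := mul_nonpos_of_nonneg_of_nonpos (Real.exp_pos _).le (sub_nonpos.2 (hf'_le t ht))
  intro t ht
  have hdecay : Real.exp (-K * t) * f t ≤ Real.exp (-K * a) * f a :=
    hanti (left_mem_Icc.2 (ht.1.trans ht.2)) ht ht.1
  have ha' : Real.exp (-K * a) * f a ≤ 0 := mul_nonpos_of_nonneg_of_nonpos (Real.exp_pos _).le ha
  exact nonpos_of_mul_nonpos_right (hdecay.trans ha') (Real.exp_pos _)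

end FiniteExceptions

section EVI

variable {H : Type*} [NormedAddCommGroup H] [InnerProductSpace ℝ H]

/-- The evolutionary variational inequality with defect `0` at the point `x` with velocity `x'`. -/
def SatisfiesEVI (F : H → ℝ) (C₀ : ℝ) (x x' : H) : Prop :=
  ∀ v : H, inner ℝ x' (x - v) ≤ F v - F x + (C₀ / 2) * ‖x - v‖ ^ 2

theorem SatisfiesEVI.inner_sub_le {F : H → ℝ} {C₀ : ℝ} {x y x' y' : H}
    (hx : SatisfiesEVI F C₀ x x') (hy : SatisfiesEVI F C₀ y y') :
    inner ℝ (x' - y') (x - y) ≤ C₀ * ‖x - y‖ ^ 2 := by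
  have h₁ := hx y
  have h₂ := hy x
  rw [← neg_sub x y, inner_neg_right, norm_neg] at h₂
  rw [inner_sub_left]
  linarith

end EVI

theorem evi_uniqueness_general
    {H : Type*} [NormedAddCommGroup H] [InnerProductSpace ℝ H]
    (F : H → ℝ) (C₀ T : ℝ)
    (S : Set ℝ) (hS : S.Finite)
    (u w : ℝ → H) (u' w' : ℝ → H)
    (hu_cont : ContinuousOn u (Set.Icc 0 T))
    (hw_cont : ContinuousOn w (Set.Icc 0 T))
    (hu_deriv : ∀ t ∈ Set.Ioo 0 T \ S, HasDerivAt u (u' t) t)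
    (hw_deriv : ∀ t ∈ Set.Ioo 0 T \ S, HasDerivAt w (w' t) t)
    (hu_evi : ∀ t ∈ Set.Ioo 0 T \ S, ∀ v : H,
      (inner ℝ (u' t) (u t - v) : ℝ) ≤ F v - F (u t) + (C₀ / 2) * ‖u t - v‖ ^ 2)
    (hw_evi : ∀ t ∈ Set.Ioo 0 T \ S, ∀ v : H,
      (inner ℝ (w' t) (w t - v) : ℝ) ≤ F v - F (w t) + (C₀ / 2) * ‖w t - v‖ ^ 2)
    (h0 : u 0 = w 0) :
    ∀ t ∈ Set.Icc 0 T, u t = w t := by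
  have hdist : ∀ t ∈ Icc 0 T, ‖u t - w t‖ ^ 2 ≤ 0 := by
    refine le_zero_of_hasDerivAt_le_mul_off_finite (2 * C₀) hS
      ((hu_cont.sub hw_cont).norm.pow 2)
      (fun t ht => ((hu_deriv t ht).sub (hw_deriv t ht)).norm_sq) (fun t ht => ?_)
      (by simp [h0])
    have := SatisfiesEVI.inner_sub_le (hu_evi t ht) (hw_evi t ht)
    rw [real_inner_comm, Pi.sub_apply]
    linarith
  intro t ht
  simpa [sub_eq_zero] using hdist t ht

/-- Uniqueness of curves satisfying the evolutionary variational inequality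
with defect 0 and semi-convexity constant `C₀`. -/
theorem evi_uniqueness
    {H : Type*} [NormedAddCommGroup H] [InnerProductSpace ℝ H] [CompleteSpace H]
    (F : H → ℝ) (C₀ T : ℝ) (hC₀ : 0 ≤ C₀) (hT : 0 < T)
    (S : Set ℝ) (hS : S.Finite) (hST : S ⊆ Set.Ioo 0 T)
    (u w : ℝ → H) (u' w' : ℝ → H)
    (hu_cont : ContinuousOn u (Set.Icc 0 T))
    (hw_cont : ContinuousOn w (Set.Icc 0 T))
    (hu_deriv : ∀ t ∈ Set.Ioo 0 T \ S, HasDerivAt u (u' t) t)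
    (hw_deriv : ∀ t ∈ Set.Ioo 0 T \ S, HasDerivAt w (w' t) t)
    (hu_evi : ∀ t ∈ Set.Ioo 0 T \ S, ∀ v : H,
      (inner ℝ (u' t) (u t - v) : ℝ) ≤ F v - F (u t) + (C₀ / 2) * ‖u t - v‖ ^ 2)
    (hw_evi : ∀ t ∈ Set.Ioo 0 T \ S, ∀ v : H,
      (inner ℝ (w' t) (w t - v) : ℝ) ≤ F v - F (w t) + (C₀ / 2) * ‖w t - v‖ ^ 2)
    (h0 : u 0 = w 0) :
    ∀ t ∈ Set.Icc 0 T, u t = w t :=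
  evi_uniqueness_general F C₀ T S hS u w u' w' hu_cont hw_cont hu_deriv hw_deriv hu_evi hw_evi h0
end

section
/- Let H be a real inner product space and F : H → ℝ a function that is subadditive (F(a + b) ≤ F(a) + F(b) for all a, b ∈ H) and even (F(−a) = F(a) for all a ∈ H). Let w ∈ H and let ζ ∈ H be a subgradient of F at w, i.e. F(w) + ⟨ζ, v − w⟩ ≤ F(v) for all v ∈ H. Then for all v, z ∈ H, ⟨ζ, v − z⟩ ≤ F(v) − F(z) + 2·F(z − w). -/
/-!
Split `⟪ζ, v - z⟫ = ⟪ζ, v - w⟫ + ⟪ζ, w - z⟫`. The first term is at most `F v - F w` by the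
subgradient inequality. A subgradient of a subadditive function is dominated by the function
itself, since `⟪ζ, u⟫ ≤ F (w + u) - F w ≤ F u`; applied to `u = w - z` and combined with
evenness this bounds the second term by `F (z - w)`. Finally `F z - F w ≤ F (z - w)` by
subadditivity, which accounts for the second copy of `F (z - w)`.
-/

open scoped RealInnerProductSpace

theorem sub_le_of_subadditive {G : Type*} [AddCommGroup G] {F : G → ℝ}
    (hF_subadd : ∀ a b : G, F (a + b) ≤ F a + F b) (z w : G) :
    F z - F w ≤ F (z - w) := by
  have h := hF_subadd w (z - w)
  rw [add_sub_cancel] at h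
  linarith

theorem inner_le_of_subgradient_of_subadditive {H : Type*} [NormedAddCommGroup H]
    [InnerProductSpace ℝ H] {F : H → ℝ} (hF_subadd : ∀ a b : H, F (a + b) ≤ F a + F b)
    {w ζ : H} (hζ : ∀ v : H, F w + ⟪ζ, v - w⟫ ≤ F v) (u : H) : ⟪ζ, u⟫ ≤ F u := by
  have h := hζ (w + u)
  rw [add_sub_cancel_left] at h
  linarith [hF_subadd w u]

/-- Key estimate of the term I₁: for a subadditive even function `F` and a
subgradient `ζ` of `F` at `w`, one has
`⟨ζ, v − z⟩ ≤ F v − F z + 2·F (z − w)` for all `v, z`. -/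
theorem subgradient_shifted_estimate
    {H : Type*} [NormedAddCommGroup H] [InnerProductSpace ℝ H]
    (F : H → ℝ)
    (hF_subadd : ∀ a b : H, F (a + b) ≤ F a + F b)
    (hF_even : ∀ a : H, F (-a) = F a)
    (w ζ : H)
    (hζ : ∀ v : H, F w + (inner ℝ ζ (v - w) : ℝ) ≤ F v) :
    ∀ v z : H, (inner ℝ ζ (v - z) : ℝ) ≤ F v - F z + 2 * F (z - w) := by
  intro v z
  have h_first : ⟪ζ, v - w⟫ ≤ F v - F w := by linarith [hζ v]
  have h_second : ⟪ζ, w - z⟫ ≤ F (z - w) := by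
    rw [← hF_even, neg_sub]
    exact inner_le_of_subgradient_of_subadditive hF_subadd hζ (w - z)
  calc ⟪ζ, v - z⟫ = ⟪ζ, v - w⟫ + ⟪ζ, w - z⟫ := by rw [← inner_add_right, sub_add_sub_cancel]
    _ ≤ F v - F w + F (z - w) := add_le_add h_first h_second
    _ ≤ F v - F z + 2 * F (z - w) := by linarith [sub_le_of_subadditive hF_subadd z w]
end
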